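/- arXiv:2101.11126 — 3 statements merged into one kernel-verified Lean document; each statement's English description precedes it below -/
import Mathlib

section
/- For a state assignment state : V → {In, Out} on a graph G, if no vertex is enabled by rule R1 (i.e., there is no v with state(v)=Out such that all u ∈ N(v) satisfy state(u)=Out and exp(u)=0) and no vertex is enabled by rule R2 (i.e., there is no v with state(v)=In having some neighbor u with state(u)=In or exp(u)>1), where exp(u) = |{w ∈ N(u) : state(w)=In}|, then the set S = {v : state(v)=In} is a distance-2 independent set. -/
/-! Two `In` vertices at distance 1 enable R2 at either of them; two at distance 2 give their
common neighbour `exp ≥ 2`, which again enables R2. -/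

variable {V : Type*} [Fintype V] [DecidableEq V]

/-- `S` is a distance-2 independent set: any two distinct vertices of `S`
are at graph distance strictly greater than 2. -/
def Dist2Indep (G : SimpleGraph V) (S : Set V) : Prop :=
  ∀ u ∈ S, ∀ v ∈ S, u ≠ v → 2 < G.edist u v

/-- `exp G s u` counts the neighbors of `u` whose state is `In` (`true`). -/
def expIn (G : SimpleGraph V) [DecidableRel G.Adj] (s : V → Bool) (u : V) : ℕ :=
  ((G.neighborFinset u).filter (fun w => s w = true)).card

/-- Guard of rule R1 at `v`: `v` is Out and every neighbor is Out with exp 0. -/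
def R1guard (G : SimpleGraph V) [DecidableRel G.Adj] (s : V → Bool) (v : V) : Prop :=
  s v = false ∧ ∀ u ∈ G.neighborSet v, s u = false ∧ expIn G s u = 0

/-- Guard of rule R2 at `v`: `v` is In and some neighbor is In or has exp > 1. -/
def R2guard (G : SimpleGraph V) [DecidableRel G.Adj] (s : V → Bool) (v : V) : Prop :=
  s v = true ∧ ∃ u ∈ G.neighborSet v, s u = true ∨ 1 < expIn G s u

section

variable {G : SimpleGraph V} [DecidableRel G.Adj] {s : V → Bool}

omit [DecidableEq V] in
theorem one_lt_expIn_of_adj_of_adj {u v w : V} (hu : s u = true) (hv : s v = true) (huv : u ≠ v)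
    (hwu : G.Adj w u) (hwv : G.Adj w v) : 1 < expIn G s w :=
  Finset.one_lt_card.mpr ⟨u, by simp [hwu, hu], v, by simp [hwv, hv], huv⟩

omit [DecidableEq V] in
theorem not_adj_of_not_R2guard (h2 : ¬ ∃ v, R2guard G s v) {u v : V} (hu : s u = true)
    (hv : s v = true) : ¬ G.Adj u v :=
  fun huv ↦ h2 ⟨u, hu, v, huv, Or.inl hv⟩

omit [DecidableEq V] in
theorem expIn_le_one_of_not_R2guard (h2 : ¬ ∃ v, R2guard G s v) {u w : V} (hu : s u = true)
    (huw : G.Adj u w) : expIn G s w ≤ 1 :=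
  not_lt.mp fun hw ↦ h2 ⟨u, hu, w, huw, Or.inr hw⟩

end

theorem stmt_4_general (G : SimpleGraph V) [DecidableRel G.Adj] (s : V → Bool)
    (h2 : ¬ ∃ v, R2guard G s v) :
    Dist2Indep G {v | s v = true} := by
  intro u hu v hv huv
  refine SimpleGraph.two_lt_edist_iff.mpr ⟨huv, not_adj_of_not_R2guard h2 hu hv, ?_⟩
  refine Set.eq_empty_of_forall_notMem fun w hw ↦ ?_
  obtain ⟨huw, hvw⟩ := G.mem_commonNeighbors.mp hw
  exact (expIn_le_one_of_not_R2guard h2 hu huw).not_gt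
    (one_lt_expIn_of_adj_of_adj hu hv huv huw.symm hvw.symm)

theorem stmt_4 (G : SimpleGraph V) [DecidableRel G.Adj] (s : V → Bool)
    (h1 : ¬ ∃ v, R1guard G s v) (h2 : ¬ ∃ v, R2guard G s v) :
    Dist2Indep G {v | s v = true} :=
  stmt_4_general G s h2
end

section
/- For a state assignment state : V → {In, Out} on a graph G with exp(u) = |{w ∈ N(u) : state(w)=In}|, if no vertex is enabled by rule R1 (no v with state(v)=Out and all u ∈ N(v) with state(u)=Out and exp(u)=0) and no vertex is enabled by R2 (no v with state(v)=In having a neighbor u with state(u)=In or exp(u)>1), then S = {v : state(v)=In} is a maximal distance-2 independent set: adding any vertex w ∉ S to S violates the pairwise distance > 2 condition. -/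
variable {V : Type*} [Fintype V] [DecidableEq V]

theorem stmt_5 (G : SimpleGraph V) [DecidableRel G.Adj] (s : V → Bool)
    (h1 : ¬ ∃ v, R1guard G s v) (h2 : ¬ ∃ v, R2guard G s v) :
    Dist2Indep G {v | s v = true} ∧
      ∀ w ∉ {v | s v = true}, ¬ Dist2Indep G (insert w {v | s v = true}) := by
  have key2 : ∀ v u, s v = true → G.Adj v u → s u = false ∧ expIn G s u ≤ 1 := by
    intro v u hv hadj
    constructor
    · cases hsu : s u with
      | false => rfl
      | true => exact absurd ⟨v, hv, u, hadj, Or.inl hsu⟩ h2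
    · by_contra h
      exact h2 ⟨v, hv, u, hadj, Or.inr (lt_of_not_ge h)⟩
  constructor
  · intro u hu v hv hne
    by_contra hle
    push_neg at hle
    obtain ⟨p, hp⟩ := G.exists_walk_of_edist_ne_top
      (by intro ht; rw [ht] at hle; exact absurd hle (by norm_num))
    have hlen : p.length ≤ 2 := by
      have := hp ▸ hle
      exact_mod_cast this
    match p, hp, hlen with
    | SimpleGraph.Walk.nil, hp, _ => exact hne rfl
    | SimpleGraph.Walk.cons h SimpleGraph.Walk.nil, hp, _ =>
        simp only [Set.mem_setOf_eq] at hv; exact absurd ((key2 u v hu h).1) (by simp [hv])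
    | SimpleGraph.Walk.cons h (SimpleGraph.Walk.cons h' SimpleGraph.Walk.nil), hp, _ =>
        -- u adj x, x adj v
        rename_i x hlen2
        have h2le : 2 ≤ expIn G s x := by
          rw [expIn]
          rw [Nat.succ_le_iff]
          rw [Finset.one_lt_card]
          refine ⟨u, ?_, v, ?_, hne⟩ <;> simp [SimpleGraph.mem_neighborFinset]
          · exact ⟨h.symm, hu⟩
          · exact ⟨h', hv⟩
        have := (key2 u x hu h).2
        simp only [Set.mem_setOf_eq] at hu hv
        omega
    | SimpleGraph.Walk.cons h (SimpleGraph.Walk.cons h' (SimpleGraph.Walk.cons h'' q)), hp, hlen =>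
        simp at hlen
  · intro w hw hD
    have hsw : s w = false := by
      simpa using hw
    have : ¬ R1guard G s w := fun hg => h1 ⟨w, hg⟩
    rw [R1guard] at this
    push_neg at this
    obtain ⟨u, hu, hbad⟩ := this hsw
    have hadj : G.Adj w u := hu
    by_cases hsu : s u = true
    · have hne : w ≠ u := fun h => by rw [h, hsu] at hsw; simp at hsw
      have := hD w (Set.mem_insert _ _) u (Set.mem_insert_of_mem _ hsu) hne
      have hle : G.edist w u ≤ 1 := by
        have := G.edist_le (SimpleGraph.Walk.cons hadj SimpleGraph.Walk.nil)
        simpa using this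
      have : (2 : ℕ∞) < 1 := lt_of_lt_of_le this hle
      norm_num at this
    · have hexp : expIn G s u ≠ 0 := fun h0 =>
        hbad (by simpa using hsu) h0
      obtain ⟨x, hx⟩ := Finset.card_ne_zero.mp hexp
      simp only [Finset.mem_filter, SimpleGraph.mem_neighborFinset] at hx
      obtain ⟨hux, hsx⟩ := hx
      have hne : w ≠ x := fun h => by rw [h, hsx] at hsw; simp at hsw
      have := hD w (Set.mem_insert _ _) x (Set.mem_insert_of_mem _ hsx) hne
      have hle : G.edist w x ≤ 2 := by
        have := G.edist_le (SimpleGraph.Walk.cons hadj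
          (SimpleGraph.Walk.cons hux SimpleGraph.Walk.nil))
        simpa using this
      exact absurd (lt_of_lt_of_le this hle) (lt_irrefl _)
end

section
/- After a vertex v executes rule R1 (changing its state from Out to In, with all its neighbors u having state Out and exp 0 beforehand), no vertex w at distance ≤ 2 from v can subsequently satisfy the guard of R1, since w has a vertex at distance ≤ 2 (namely v) with state In, which makes either some neighbor of w have state In or exp ≥ 1. -/
variable {V : Type*} [Fintype V] [DecidableEq V]

namespace SimpleGraph

theorem adj_or_commonNeighbors_nonempty_of_edist_le_two {V : Type*} {G : SimpleGraph V}
    {u v : V} (hne : u ≠ v) (h : G.edist u v ≤ 2) : G.Adj u v ∨ (G.commonNeighbors u v).Nonempty := by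
  by_contra! hfar
  exact h.not_gt (two_lt_edist_iff.mpr ⟨hne, hfar.1, hfar.2⟩)

end SimpleGraph

section Guards

variable {V : Type*} [Fintype V] {G : SimpleGraph V} [DecidableRel G.Adj] {s : V → Bool}

theorem expIn_eq_zero_iff {u : V} : expIn G s u = 0 ↔ ∀ x, G.Adj u x → s x = false := by
  simp [expIn, Finset.filter_eq_empty_iff]

theorem R1guard.state_eq_false_of_adj {w x : V} (h : R1guard G s w) (hwx : G.Adj w x) :
    s x = false :=
  (h.2 x hwx).1

theorem R1guard.state_eq_false_of_adj_adj {w x y : V} (h : R1guard G s w) (hwx : G.Adj w x)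
    (hxy : G.Adj x y) : s y = false :=
  expIn_eq_zero_iff.mp (h.2 x hwx).2 y hxy

end Guards

theorem stmt_7 (G : SimpleGraph V) [DecidableRel G.Adj] (s : V → Bool) (v w : V)
    (hv : s v = true) (hw : w ≠ v) (hd : G.edist v w ≤ 2) :
    ¬ R1guard G s w := by
  intro hR
  rcases SimpleGraph.adj_or_commonNeighbors_nonempty_of_edist_le_two hw.symm hd with
    hadj | ⟨x, hvx, hwx⟩
  · simpa [hv] using hR.state_eq_false_of_adj hadj.symm
  · simpa [hv] using hR.state_eq_false_of_adj_adj hwx hvx.symm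
end
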